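/- arXiv:2604.15286 — 3 statements merged into one kernel-verified Lean document; each statement's English description precedes it below -/
import Mathlib

section
/- Let F be a finite field of characteristic 2 and let B be a non-derogative 2×2 matrix over F with trace u₁. Then B can be written as B = N + D where N is a square-zero matrix and D is diagonalizable; moreover, if u₁ = 0 then D can be chosen diagonalizable with both eigenvalues equal to some v ∈ F satisfying v² = det B, and if u₁ ≠ 0 then D can be chosen diagonalizable with eigenvalues 0 and u₁. In particular, if F = 𝔽₂ then B is the sum of a square-zero matrix and an idempotent matrix D (i.e., D² = D). -/
/-- `D` is diagonalizable with all eigenvalues (diagonal entries) lying in `S`. -/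
def DiagWith {F : Type*} [Field F] {n : ℕ}
    (D : Matrix (Fin n) (Fin n) F) (S : Set F) : Prop :=
  ∃ (U : (Matrix (Fin n) (Fin n) F)ˣ) (d : Fin n → F),
    (∀ i, d i ∈ S) ∧
    D = (U : Matrix (Fin n) (Fin n) F) * Matrix.diagonal d *
        ((↑U⁻¹ : Matrix (Fin n) (Fin n) F))

/-- A square matrix is non-derogative if its characteristic polynomial equals
its minimal polynomial. -/
def Nonderogative {F : Type*} [Field F] {n : ℕ}
    (B : Matrix (Fin n) (Fin n) F) : Prop :=
  B.charpoly = minpoly F B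

open Matrix Polynomial

section Aux

variable {F : Type*} [Field F]

lemma diagWith_mono {n : ℕ} {D : Matrix (Fin n) (Fin n) F} {S T : Set F}
    (hST : S ⊆ T) (h : DiagWith D S) : DiagWith D T := by
  obtain ⟨U, d, hd, heq⟩ := h
  exact ⟨U, d, fun i => hST (hd i), heq⟩

lemma sq_eq_of_diagWith {n : ℕ} {D : Matrix (Fin n) (Fin n) F} {S : Set F}
    (h : DiagWith D S) (hS : ∀ x ∈ S, x * x = x) : D ^ 2 = D := by
  obtain ⟨U, d, hd, rfl⟩ := h
  have h1 : ((↑U⁻¹ : Matrix (Fin n) (Fin n) F)) * (↑U : Matrix (Fin n) (Fin n) F) = 1 := by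
    rw [← Units.val_mul, inv_mul_cancel, Units.val_one]
  have hdd : Matrix.diagonal d * Matrix.diagonal d = Matrix.diagonal d := by
    rw [Matrix.diagonal_mul_diagonal]
    exact congrArg Matrix.diagonal (funext fun i => hS _ (hd i))
  rw [pow_two]
  calc ((U : Matrix (Fin n) (Fin n) F) * Matrix.diagonal d * (↑U⁻¹ : Matrix (Fin n) (Fin n) F)) *
        ((U : Matrix (Fin n) (Fin n) F) * Matrix.diagonal d * (↑U⁻¹ : Matrix (Fin n) (Fin n) F))
      = (U : Matrix (Fin n) (Fin n) F) * Matrix.diagonal d *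
          (((↑U⁻¹ : Matrix (Fin n) (Fin n) F)) * (↑U : Matrix (Fin n) (Fin n) F)) *
          (Matrix.diagonal d * (↑U⁻¹ : Matrix (Fin n) (Fin n) F)) := by
        simp only [Matrix.mul_assoc]
    _ = (U : Matrix (Fin n) (Fin n) F) * (Matrix.diagonal d * Matrix.diagonal d) *
          (↑U⁻¹ : Matrix (Fin n) (Fin n) F) := by
        rw [h1, Matrix.mul_one]; simp only [Matrix.mul_assoc]
    _ = (U : Matrix (Fin n) (Fin n) F) * Matrix.diagonal d *
          (↑U⁻¹ : Matrix (Fin n) (Fin n) F) := by rw [hdd]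

variable [CharP F 2]

/-- The trace-zero case. -/
lemma case_zero [Fintype F] (B : Matrix (Fin 2) (Fin 2) F) (h0 : Matrix.trace B = 0) :
    ∃ (N D : Matrix (Fin 2) (Fin 2) F) (v : F),
      v ^ 2 = B.det ∧ B = N + D ∧ N ^ 2 = 0 ∧ DiagWith D {v} := by
  obtain ⟨v, hv⟩ := FiniteField.isSquare_of_char_two (ringChar.eq F 2) B.det
  -- hv : B.det = v * v
  have htr : B 0 0 + B 1 1 = 0 := by rw [← Matrix.trace_fin_two]; exact h0
  have hdet : B.det = B 0 0 * B 1 1 - B 0 1 * B 1 0 := Matrix.det_fin_two B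
  have h2 : (2 : F) = 0 := by exact_mod_cast CharP.cast_eq_zero F 2
  refine ⟨B - Matrix.diagonal (fun _ => v), Matrix.diagonal (fun _ => v), v, ?_, by abel, ?_, ?_⟩
  · rw [pow_two]; exact hv.symm
  · ext i j
    fin_cases i <;> fin_cases j <;>
      simp [pow_two, Matrix.mul_apply, Fin.sum_univ_two, Matrix.sub_apply,
        Matrix.diagonal, Matrix.of_apply]
    · linear_combination B 0 0 * htr + hdet - hv - (B 0 0 * v) * h2
    · linear_combination B 0 1 * htr - (B 0 1 * v) * h2
    · linear_combination B 1 0 * htr - (B 1 0 * v) * h2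
    · linear_combination B 1 1 * htr + hdet - hv - (B 1 1 * v) * h2
  · refine ⟨1, fun _ => v, fun i => rfl, ?_⟩
    simp

/-- The trace-nonzero case. -/
lemma case_ne (B : Matrix (Fin 2) (Fin 2) F) (hB : Nonderogative B)
    (u₁ : F) (hu : Matrix.trace B = u₁) (hne : u₁ ≠ 0) :
    ∃ N D : Matrix (Fin 2) (Fin 2) F,
      B = N + D ∧ N ^ 2 = 0 ∧ DiagWith D {0, u₁} := by
  have h2 : (2 : F) = 0 := by exact_mod_cast CharP.cast_eq_zero F 2
  set d := B.det with hd'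
  have key : ∃ V : Matrix (Fin 2) (Fin 2) F, IsUnit V.det ∧
      B * V = V * !![0, d; 1, u₁] := by
    obtain ⟨a, b, c, e, rfl⟩ : ∃ a b c e, B = !![a,b;c,e] :=
      ⟨_, _, _, _, Matrix.eta_fin_two B⟩
    have htr : a + e = u₁ := by
      rw [← hu, Matrix.trace_fin_two]; simp
    have hdet : d = a * e - b * c := by rw [hd', Matrix.det_fin_two_of]
    by_cases hc : c ≠ 0
    · refine ⟨!![1, a; 0, c], ?_, ?_⟩
      · rw [Matrix.det_fin_two_of]; simpa using hc
      · ext i j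
        fin_cases i <;> fin_cases j <;>
          simp [Matrix.mul_apply, Fin.sum_univ_two]
        · linear_combination a * htr - hdet + (b*c - a*e) * h2
        · linear_combination c * htr
    push_neg at hc
    by_cases hb : b ≠ 0
    · refine ⟨!![0, b; 1, e], ?_, ?_⟩
      · rw [Matrix.det_fin_two_of]; simpa using hb
      · ext i j
        fin_cases i <;> fin_cases j <;>
          simp [Matrix.mul_apply, Fin.sum_univ_two]
        · linear_combination b * htr
        · linear_combination e * htr - hdet + (b*c - a*e) * h2
    push_neg at hb
    by_cases hae : a ≠ e
    · refine ⟨!![1, a; 1, e], ?_, ?_⟩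
      · rw [Matrix.det_fin_two_of]
        simpa [sub_eq_zero] using fun h => hae h.symm
      · ext i j
        fin_cases i <;> fin_cases j <;>
          simp [Matrix.mul_apply, Fin.sum_univ_two, hb, hc]
        · linear_combination a * htr - hdet - a*e*h2 + c*hb
        · linear_combination e * htr - hdet - a*e*h2 + c*hb
    · exfalso
      push_neg at hae
      have hBs : !![a,b;c,e] = (a : F) • (1 : Matrix (Fin 2) (Fin 2) F) := by
        subst hae; rw [hb, hc]
        ext i j; fin_cases i <;> fin_cases j <;> simp
      have hdvd : minpoly F (!![a,b;c,e]) ∣ (X - C a) := by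
        apply minpoly.dvd
        simp [hBs, Algebra.algebraMap_eq_smul_one]
      have hle := Polynomial.natDegree_le_of_dvd hdvd (Polynomial.X_sub_C_ne_zero a)
      have hcp : (Matrix.charpoly !![a,b;c,e]).natDegree = 2 := by
        rw [Matrix.charpoly_natDegree_eq_dim]; simp
      rw [Nonderogative] at hB
      rw [hB] at hcp
      rw [hcp, Polynomial.natDegree_X_sub_C] at hle
      omega
  obtain ⟨V, hVdet, hVC⟩ := key
  obtain ⟨Vu, rfl⟩ := (Matrix.isUnit_iff_isUnit_det V).mpr hVdet
  set Vm : Matrix (Fin 2) (Fin 2) F := ↑Vu with hVm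
  set Vi : Matrix (Fin 2) (Fin 2) F := ↑Vu⁻¹ with hVi
  have hinv : Vi * Vm = 1 := Vu.inv_mul
  have hinv' : Vm * Vi = 1 := Vu.mul_inv
  have hBconj : B = Vm * !![0, d; 1, u₁] * Vi := by
    calc B = B * (Vm * Vi) := by rw [hinv', Matrix.mul_one]
      _ = (B * Vm) * Vi := by rw [Matrix.mul_assoc]
      _ = Vm * !![0, d; 1, u₁] * Vi := by rw [hVC]
  refine ⟨Vm * !![0, d; 0, 0] * Vi, Vm * !![0, 0; 1, u₁] * Vi, ?_, ?_, ?_⟩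
  · have hsplit : (!![0, d; 1, u₁] : Matrix (Fin 2) (Fin 2) F)
        = !![0, d; 0, 0] + !![0, 0; 1, u₁] := by
      ext i j; fin_cases i <;> fin_cases j <;> simp
    rw [hBconj, hsplit, Matrix.mul_add, Matrix.add_mul]
  · have hN0 : (!![0, d; 0, 0] : Matrix (Fin 2) (Fin 2) F) * !![0, d; 0, 0] = 0 := by
      ext i j; fin_cases i <;> fin_cases j <;> simp [Matrix.mul_apply, Fin.sum_univ_two]
    rw [pow_two]
    calc (Vm * !![0, d; 0, 0] * Vi) * (Vm * !![0, d; 0, 0] * Vi)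
        = Vm * (!![0, d; 0, 0] * ((Vi * Vm) * !![0, d; 0, 0])) * Vi := by
          simp only [Matrix.mul_assoc]
      _ = 0 := by rw [hinv, Matrix.one_mul, hN0]; simp
  · have hW : IsUnit (!![u₁, 0; 1, 1] : Matrix (Fin 2) (Fin 2) F) :=
      (Matrix.isUnit_iff_isUnit_det _).mpr
        (by rw [Matrix.det_fin_two_of]; simpa using hne)
    obtain ⟨Wu, hWu⟩ := hW
    refine ⟨Vu * Wu, ![0, u₁], ?_, ?_⟩
    · intro i; fin_cases i <;> simp
    · have hDW : (!![0, 0; 1, u₁] : Matrix (Fin 2) (Fin 2) F) * (↑Wu : Matrix (Fin 2) (Fin 2) F)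
          = (↑Wu : Matrix (Fin 2) (Fin 2) F) * Matrix.diagonal ![0, u₁] := by
        rw [hWu]
        ext i j
        fin_cases i <;> fin_cases j <;>
          simp [Matrix.mul_apply, Fin.sum_univ_two, Matrix.diagonal]
        linear_combination u₁ * h2
      have hWinv : (↑Wu : Matrix (Fin 2) (Fin 2) F) * (↑Wu⁻¹ : Matrix (Fin 2) (Fin 2) F) = 1 :=
        Wu.mul_inv
      have hD0 : (!![0, 0; 1, u₁] : Matrix (Fin 2) (Fin 2) F)
          = (↑Wu : Matrix (Fin 2) (Fin 2) F) * Matrix.diagonal ![0, u₁] *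
            (↑Wu⁻¹ : Matrix (Fin 2) (Fin 2) F) := by
        rw [← hDW, Matrix.mul_assoc, hWinv, Matrix.mul_one]
      rw [hD0, hVm, hVi]
      simp [Units.val_mul, _root_.mul_inv_rev, Matrix.mul_assoc]

end Aux

theorem stmt0 (F : Type*) [Field F] [Fintype F] [CharP F 2]
    (B : Matrix (Fin 2) (Fin 2) F) (hB : Nonderogative B)
    (u₁ : F) (hu : Matrix.trace B = u₁) :
    (∃ N D : Matrix (Fin 2) (Fin 2) F,
        B = N + D ∧ N ^ 2 = 0 ∧ DiagWith D Set.univ) ∧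
    (u₁ = 0 → ∃ (N D : Matrix (Fin 2) (Fin 2) F) (v : F),
        v ^ 2 = B.det ∧ B = N + D ∧ N ^ 2 = 0 ∧ DiagWith D {v}) ∧
    (u₁ ≠ 0 → ∃ N D : Matrix (Fin 2) (Fin 2) F,
        B = N + D ∧ N ^ 2 = 0 ∧ DiagWith D {0, u₁}) ∧
    (Fintype.card F = 2 → ∃ N D : Matrix (Fin 2) (Fin 2) F,
        B = N + D ∧ N ^ 2 = 0 ∧ D ^ 2 = D) := by
  refine ⟨?_, ?_, ?_, ?_⟩
  · by_cases h0 : u₁ = 0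
    · obtain ⟨N, D, v, _, e1, e2, e3⟩ := case_zero B (hu.trans h0)
      exact ⟨N, D, e1, e2, diagWith_mono (Set.subset_univ _) e3⟩
    · obtain ⟨N, D, e1, e2, e3⟩ := case_ne B hB u₁ hu h0
      exact ⟨N, D, e1, e2, diagWith_mono (Set.subset_univ _) e3⟩
  · intro h0; exact case_zero B (hu.trans h0)
  · intro hne; exact case_ne B hB u₁ hu hne
  · intro hcard
    have hx : ∀ x : F, x * x = x := by
      intro x
      have := FiniteField.pow_card x
      rw [hcard, pow_two] at this
      exact this
    by_cases h0 : u₁ = 0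
    · obtain ⟨N, D, v, _, e1, e2, e3⟩ := case_zero B (hu.trans h0)
      exact ⟨N, D, e1, e2, sq_eq_of_diagWith e3 (fun x _ => hx x)⟩
    · obtain ⟨N, D, e1, e2, e3⟩ := case_ne B hB u₁ hu h0
      exact ⟨N, D, e1, e2, sq_eq_of_diagWith e3 (fun x _ => hx x)⟩
end

section
/- Let k ≥ 2 and let B be a non-derogative matrix of order 4k over the field 𝔽₂ with two elements. Then B can be written as B = N + D where N, D are matrices of order 4k over 𝔽₂ with N² = 0 and D⁴ = D. -/
open Polynomial

namespace Module.End

section Field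

variable {F V : Type*} [Field F] [AddCommGroup V] [Module F V]

theorem exists_aeval_apply_eq_zero_imp_aeval_eq_zero [FiniteDimensional F V]
    (f : Module.End F V) : ∃ v : V, ∀ p : F[X], aeval f p v = 0 → aeval f p = 0 := by
  obtain ⟨x, hx⟩ := Module.exists_ker_toSpanSingleton_eq_annihilator F[X] (Module.AEval' f)
  refine ⟨(Module.AEval'.of f).symm x, fun p hp => LinearMap.ext fun w => ?_⟩
  have hpx : p ∈ Module.annihilator F[X] (Module.AEval' f) := by
    rw [← hx, LinearMap.mem_ker, LinearMap.toSpanSingleton_apply,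
      ← (Module.AEval'.of f).apply_symm_apply x, ← Module.AEval.of_aeval_smul,
      Module.End.smul_def, hp, map_zero]
  have := Module.mem_annihilator.mp hpx (Module.AEval'.of f w)
  rw [← Module.AEval.of_aeval_smul] at this
  simpa using this

theorem linearIndependent_pow_apply (f : Module.End F V) {v : V}
    (hv : ∀ p : F[X], aeval f p v = 0 → aeval f p = 0) :
    LinearIndependent F fun i : Fin (minpoly F f).natDegree => (f ^ (i : ℕ)) v := by
  refine Fintype.linearIndependent_iff.2 fun g hg =>
    Fintype.linearIndependent_iff.1 (linearIndependent_pow f) g ?_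
  have hq : aeval f (∑ i, C (g i) * X ^ (i : ℕ)) = ∑ i, g i • f ^ (i : ℕ) := by
    simp [Algebra.smul_def]
  rw [← hq]
  exact hv _ (by simpa [hq] using hg)

theorem exists_basis_pow_apply [FiniteDimensional F V] (f : Module.End F V) {n : ℕ}
    (hn : Module.finrank F V = n) (hf : (minpoly F f).natDegree = n) :
    ∃ (v : V) (b : Module.Basis (Fin n) F V), ∀ i, b i = (f ^ (i : ℕ)) v := by
  obtain ⟨v, hv⟩ := exists_aeval_apply_eq_zero_imp_aeval_eq_zero f
  have hli := linearIndependent_pow_apply f hv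
  subst hf
  exact ⟨v, basisOfLinearIndependentOfCardEqFinrank' _ hli (by simp [hn]), fun i => by simp⟩

end Field

variable {R V : Type*} [Semiring R] [AddCommMonoid V] [Module R V]

theorem pow_apply_eq_of_mapsTo {D : Module.End R V} {c : ℕ → V} {σ : ℕ → ℕ} {T : Set ℕ}
    (hT : Set.MapsTo σ T T) (hD : ∀ m ∈ T, D (c m) = c (σ m)) (j : ℕ) :
    ∀ m ∈ T, (D ^ j) (c m) = c (σ^[j] m) := by
  induction j with
  | zero => simp
  | succ j ih =>
    intro m hm
    rw [pow_succ, mul_apply, hD m hm, ih _ (hT hm), Function.iterate_succ_apply]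

theorem pow_four_apply_eq_of_mapsTo {D : Module.End R V} {c : ℕ → V} {σ : ℕ → ℕ} {T : Set ℕ}
    (hT : Set.MapsTo σ T T) (hD : ∀ m ∈ T, D (c m) = c (σ m)) (hσ : ∀ m ∈ T, σ^[4] m = σ m)
    {m : ℕ} (hm : m ∈ T) : (D ^ 4) (c m) = D (c m) := by
  rw [pow_apply_eq_of_mapsTo hT hD 4 m hm, hσ m hm, hD m hm]

end Module.End

namespace Module.Basis

variable {R M ι : Type*} [CommRing R] [AddCommGroup M] [Module R M] [DecidableEq ι]

theorem apply_sub_apply_eq_repr_smul (b : Basis ι R M) {N P : Module.End R M} {j : ι}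
    (hPj : P (b j) = 0) (hNP : ∀ i ≠ j, N (P (b i)) = N (b i)) (x : M) :
    N (x - P x) = b.repr x j • N (b j) := by
  have : N ∘ₗ (LinearMap.id - P) = (b.coord j).smulRight (N (b j)) := b.ext fun i => by
    by_cases h : i = j
    · subst h; simp [hPj]
    · simp [hNP i h, Ne.symm h]
  simpa using LinearMap.congr_fun this x

theorem sq_eq_zero_of_apply_ne (b : Basis ι R M) {N P : Module.End R M} {j : ι}
    (hN : ∀ i ≠ j, N (N (b i)) = 0) (hPj : P (b j) = 0) (hNP : ∀ i ≠ j, N (P (b i)) = N (b i))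
    {y t : M} (hj : N (b j) = y - P y - t) (ht : N t = b.repr y j • N (b j)) : N ^ 2 = 0 := by
  refine b.ext fun i => ?_
  rw [pow_two, Module.End.mul_apply, LinearMap.zero_apply]
  by_cases h : i = j
  · subst h
    rw [hj, map_sub, apply_sub_apply_eq_repr_smul b hPj hNP, ht, sub_self]
  · exact hN i h

end Module.Basis

section PowerBasis

variable {R V : Type*} [CommRing R] [AddCommGroup V] [Module R V] {n : ℕ}
  {f : Module.End R V} {v : V} {b : Module.Basis (Fin n) R V}

theorem Module.Basis.constr_apply_pow_apply (hb : ∀ i, b i = (f ^ (i : ℕ)) v) (g : ℕ → V)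
    {m : ℕ} (hm : m < n) : b.constr R (fun i => g i) ((f ^ m) v) = g m := by
  rw [← hb ⟨m, hm⟩, b.constr_basis]

theorem Module.Basis.ext_pow_apply (hb : ∀ i, b i = (f ^ (i : ℕ)) v) {φ ψ : Module.End R V}
    (h : ∀ m < n, φ ((f ^ m) v) = ψ ((f ^ m) v)) : φ = ψ :=
  b.ext fun i => by rw [hb]; exact h i i.isLt

theorem Module.End.trace_eq_repr_pow_apply (hb : ∀ i, b i = (f ^ (i : ℕ)) v) (j : Fin n)
    (hj : (j : ℕ) + 1 = n) : LinearMap.trace R V f = b.repr ((f ^ n) v) j := by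
  classical
  rw [LinearMap.trace_eq_matrix_trace R b, Matrix.trace, Finset.sum_eq_single j]
  · rw [Matrix.diag_apply, LinearMap.toMatrix_apply, hb, ← Module.End.mul_apply, ← pow_succ', hj]
  · intro i _ hij
    have hi : (i : ℕ) + 1 < n := by have := Fin.val_ne_of_ne hij; omega
    rw [Matrix.diag_apply, LinearMap.toMatrix_apply, hb, ← Module.End.mul_apply, ← pow_succ',
      ← hb ⟨i + 1, hi⟩, b.repr_self, Finsupp.single_apply, if_neg (by simp [Fin.ext_iff])]
  · simp

end PowerBasis

namespace TraceZero

variable {R V : Type*} [CommRing R] [AddCommGroup V] [Module R V]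

/- The blocks are `[0]` (companion of `X`), `[1, 4], [5, 8], …, [4k-7, 4k-4]` (of `X⁴ - X`) and
`[4k-3, 4k-1]` (of `X³ - 1`, with `w` added to its last column). -/

def next (m : ℕ) : ℕ := if m % 4 = 0 then m - 2 else m + 1

def image (c : ℕ → V) (k : ℕ) (w : V) (m : ℕ) : V :=
  if m = 0 then 0 else if m = 4 * k - 1 then c (4 * k - 3) + w else c (next m)

/-- For a block end `m`, a vector killed by `D` whose only block-end coordinate is a `1` at `m`. -/
def lift (c : ℕ → V) (m : ℕ) : V :=
  if m = 0 then c 0 else if m % 4 = 0 then c m - c (m - 3) else 0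

variable {f D : Module.End R V} {c : ℕ → V} {k : ℕ} {w : V}

theorem next_iterate_four {m : ℕ} (hm : 0 < m) : next^[4] m = next m := by
  simp only [Function.iterate_succ, Function.iterate_zero, Function.comp, id, next]
  split_ifs <;> omega

theorem pow_four_apply (hD : ∀ m < 4 * k, D (c m) = image c k w m) (hw : D w = 0) {m : ℕ}
    (hm : m < 4 * k) : (D ^ 4) (c m) = D (c m) := by
  have hT : Set.MapsTo next (Set.Icc 1 (4 * k - 4)) (Set.Icc 1 (4 * k - 4)) := by
    intro m ⟨h1, h2⟩
    simp only [next, Set.mem_Icc]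
    split_ifs <;> omega
  have hDT : ∀ m ∈ Set.Icc 1 (4 * k - 4), D (c m) = c (next m) := fun m ⟨h1, h2⟩ => by
    rw [hD m (by omega), image, if_neg (by omega), if_neg (by omega)]
  have hD₀ : D (c 0) = 0 := by rw [hD 0 (by omega), image, if_pos rfl]
  have hD₁ : D (c (4 * k - 3)) = c (4 * k - 2) := by
    rw [hD _ (by omega), image, if_neg (by omega), if_neg (by omega), next, if_neg (by omega)]
    congr 1; omega
  have hD₂ : D (c (4 * k - 2)) = c (4 * k - 1) := by
    rw [hD _ (by omega), image, if_neg (by omega), if_neg (by omega), next, if_neg (by omega)]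
    congr 1; omega
  have hD₃ : D (c (4 * k - 1)) = c (4 * k - 3) + w := by
    rw [hD _ (by omega), image, if_neg (by omega), if_pos rfl]
  obtain hmT | rfl | rfl | rfl | rfl :
      m ∈ Set.Icc 1 (4 * k - 4) ∨ m = 0 ∨ m = 4 * k - 3 ∨ m = 4 * k - 2 ∨ m = 4 * k - 1 := by
    simp only [Set.mem_Icc]; omega
  · exact Module.End.pow_four_apply_eq_of_mapsTo hT hDT (fun m hm => next_iterate_four hm.1) hmT
  all_goals simp only [pow_succ, pow_zero, one_mul, Module.End.mul_apply, map_add, map_zero, hD₀,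
    hD₁, hD₂, hD₃, hw, add_zero]

theorem apply_lift (hD : ∀ m < 4 * k, D (c m) = image c k w m) {m : ℕ} (hm : m < 4 * k) :
    D (lift c m) = 0 := by
  unfold lift
  split_ifs with h0 h4
  · rw [hD 0 (by omega), image, if_pos rfl]
  · rw [map_sub, hD m hm, hD (m - 3) (by omega), image, image, if_neg h0, if_neg (by omega),
      if_neg (by omega), if_neg (by omega), next, next, if_pos h4, if_neg (by omega),
      show m - 3 + 1 = m - 2 by omega, sub_self]
  · exact map_zero D

theorem sub_apply_eq_zero (hc : ∀ m, f (c m) = c (m + 1))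
    (hD : ∀ m < 4 * k, D (c m) = image c k w m) {m : ℕ} (hm4 : m % 4 ≠ 0) (hm : m < 4 * k - 1) :
    (f - D) (c m) = 0 := by
  rw [LinearMap.sub_apply, hc, hD m (by omega), image, if_neg (by omega), if_neg (by omega),
    next, if_neg hm4, sub_self]

theorem sub_apply_sub_apply (hc : ∀ m, f (c m) = c (m + 1))
    (hD : ∀ m < 4 * k, D (c m) = image c k w m) {m : ℕ} (hm : m < 4 * k - 1) :
    (f - D) ((f - D) (c m)) = 0 := by
  by_cases hm4 : m % 4 = 0
  · have hNm : (f - D) (c m) = c (m + 1) - if m = 0 then 0 else c (m - 2) := by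
      rw [LinearMap.sub_apply, hc, hD m (by omega), image]
      split_ifs <;> simp_all [next]
    rw [hNm]
    split_ifs
    · rw [sub_zero, sub_apply_eq_zero hc hD (by omega) (by omega)]
    · rw [map_sub, sub_apply_eq_zero hc hD (by omega) (by omega),
        sub_apply_eq_zero hc hD (by omega) (by omega), sub_self]
  · rw [sub_apply_eq_zero hc hD hm4 hm, map_zero]

theorem sub_apply_lift (hc : ∀ m, f (c m) = c (m + 1))
    (hD : ∀ m < 4 * k, D (c m) = image c k w m) {m : ℕ} (hm : m < 4 * k - 1) :
    (f - D) (lift c m) = (f - D) (c m) := by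
  unfold lift
  split_ifs with h0 h4
  · rw [h0]
  · rw [map_sub, sub_apply_eq_zero (m := m - 3) hc hD (by omega) (by omega), sub_zero]
  · rw [map_zero, sub_apply_eq_zero hc hD h4 hm]

end TraceZero

open TraceZero in
theorem Module.End.exists_sq_eq_zero_add_pow_four_eq_self_of_trace_eq_zero
    {R V : Type*} [CommRing R] [AddCommGroup V] [Module R V] {k : ℕ} {f : Module.End R V} {v : V}
    {b : Module.Basis (Fin (4 * k)) R V} (hk : 0 < k) (hb : ∀ i, b i = (f ^ (i : ℕ)) v)
    (htr : LinearMap.trace R V f = 0) :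
    ∃ N D : Module.End R V, f = N + D ∧ N ^ 2 = 0 ∧ D ^ 4 = D := by
  let c : ℕ → V := fun m => (f ^ m) v
  have hc : ∀ m, f (c m) = c (m + 1) := fun m => by simp [c, pow_succ']
  have hb' : ∀ i, b i = c i := hb
  let P := b.constr R fun i => lift c i
  let D := b.constr R fun i => image c k (P (c (4 * k))) i
  have hP : ∀ m < 4 * k, P (c m) = lift c m := fun m => b.constr_apply_pow_apply hb _
  have hD : ∀ m < 4 * k, D (c m) = image c k (P (c (4 * k))) m :=
    fun m => b.constr_apply_pow_apply hb _
  have hDP : D ∘ₗ P = 0 := b.ext_pow_apply hb fun m hm => by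
    rw [LinearMap.comp_apply, hP m hm, apply_lift hD hm, LinearMap.zero_apply]
  refine ⟨f - D, D, (sub_add_cancel f D).symm, ?_,
    b.ext_pow_apply hb fun m hm => pow_four_apply hD (LinearMap.congr_fun hDP _) hm⟩
  obtain ⟨j, hj⟩ : ∃ j : Fin (4 * k), (j : ℕ) = 4 * k - 1 := ⟨⟨4 * k - 1, by omega⟩, rfl⟩
  have hlt : ∀ i ≠ j, (i : ℕ) < 4 * k - 1 := fun i hi => by
    have := Fin.val_ne_of_ne hi; omega
  refine b.sq_eq_zero_of_apply_ne (P := P) (j := j) (y := c (4 * k)) (t := c (4 * k - 3))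
    (fun i hi => ?_) ?_ (fun i hi => ?_) ?_ ?_
  · rw [hb']
    exact sub_apply_sub_apply hc hD (hlt i hi)
  · rw [hb', hj, hP _ (by omega), lift, if_neg (by omega), if_neg (by omega)]
  · rw [hb', hP _ i.isLt]
    exact sub_apply_lift hc hD (hlt i hi)
  · rw [hb', hj, LinearMap.sub_apply, hc, hD _ (by omega), image, if_neg (by omega), if_pos rfl,
      show 4 * k - 1 + 1 = 4 * k by omega]
    abel
  · rw [← Module.End.trace_eq_repr_pow_apply hb j (by omega), htr, zero_smul]
    exact sub_apply_eq_zero hc hD (by omega) (by omega)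

namespace TraceNegOne

variable {R V : Type*} [CommRing R] [AddCommGroup V] [Module R V]

/- The blocks are `[0, 2], [3, 5]` (companion of `X³ - 1`), `[6, 9], [10, 13], …, [4k-6, 4k-3]`
(of `X⁴ - X`) and `[4k-2, 4k-1]` (of `X² + X + 1`, with `w` added to its last column). -/

abbrev IsEnd (m : ℕ) : Prop := m = 2 ∨ 5 ≤ m ∧ m % 4 = 1

def next (m : ℕ) : ℕ := if IsEnd m then m - 2 else m + 1

def image (c : ℕ → V) (k : ℕ) (w : V) (m : ℕ) : V :=
  if m = 4 * k - 1 then w - c (4 * k - 2) - c (4 * k - 1) else c (next m)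

/-- For a block end `m`, a vector fixed by `D` whose only block-end coordinate is a `1` at `m`. -/
def lift (c : ℕ → V) (m : ℕ) : V :=
  if IsEnd m then c (m - 2) + c (m - 1) + c m else 0

variable {f D : Module.End R V} {c : ℕ → V} {k : ℕ} {w : V}

theorem next_iterate_four (m : ℕ) : next^[4] m = next m := by
  simp only [Function.iterate_succ, Function.iterate_zero, Function.comp, id, next, IsEnd]
  split_ifs <;> omega

theorem apply_of_not_isEnd (hD : ∀ m < 4 * k, D (c m) = image c k w m) {m : ℕ} (hm : ¬IsEnd m)
    (hmk : m < 4 * k - 1) : D (c m) = c (m + 1) := by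
  rw [hD m (by omega), image, if_neg (by omega), next, if_neg hm]

theorem apply_of_isEnd (hD : ∀ m < 4 * k, D (c m) = image c k w m) {m : ℕ} (hm : IsEnd m)
    (hmk : m < 4 * k - 1) : D (c m) = c (m - 2) := by
  rw [hD m (by omega), image, if_neg (by omega), next, if_pos hm]

theorem pow_four_apply (hk : 2 ≤ k) (hD : ∀ m < 4 * k, D (c m) = image c k w m) (hw : D w = w)
    {m : ℕ} (hm : m < 4 * k) : (D ^ 4) (c m) = D (c m) := by
  have hT : Set.MapsTo next (Set.Iic (4 * k - 3)) (Set.Iic (4 * k - 3)) := by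
    intro m hm
    simp only [next, IsEnd, Set.mem_Iic] at hm ⊢
    split_ifs <;> omega
  have hDT : ∀ m ∈ Set.Iic (4 * k - 3), D (c m) = c (next m) := fun m hm => by
    rw [Set.mem_Iic] at hm
    rw [hD m (by omega), image, if_neg (by omega)]
  have hD₁ : D (c (4 * k - 2)) = c (4 * k - 1) := by
    rw [apply_of_not_isEnd hD (by omega) (by omega)]
    congr 1; omega
  have hD₂ : D (c (4 * k - 1)) = w - c (4 * k - 2) - c (4 * k - 1) := by
    rw [hD _ (by omega), image, if_pos rfl]
  obtain hmT | rfl | rfl : m ∈ Set.Iic (4 * k - 3) ∨ m = 4 * k - 2 ∨ m = 4 * k - 1 := by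
    simp only [Set.mem_Iic]; omega
  · exact Module.End.pow_four_apply_eq_of_mapsTo hT hDT (fun m _ => next_iterate_four m) hmT
  all_goals
    simp only [pow_succ, pow_zero, one_mul, Module.End.mul_apply, map_sub, hD₁, hD₂, hw]
    abel

theorem apply_lift (hD : ∀ m < 4 * k, D (c m) = image c k w m) {m : ℕ} (hm : m < 4 * k - 1) :
    D (lift c m) = lift c m := by
  unfold lift
  split_ifs with h
  · rw [map_add, map_add, apply_of_not_isEnd hD (by omega) (by omega),
      apply_of_not_isEnd hD (by omega) (by omega), apply_of_isEnd hD h hm,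
      show m - 2 + 1 = m - 1 by omega, show m - 1 + 1 = m by omega]
    abel
  · exact map_zero D

theorem sub_apply_eq_zero (hc : ∀ m, f (c m) = c (m + 1))
    (hD : ∀ m < 4 * k, D (c m) = image c k w m) {m : ℕ} (hm : ¬IsEnd m) (hmk : m < 4 * k - 1) :
    (f - D) (c m) = 0 := by
  rw [LinearMap.sub_apply, hc, apply_of_not_isEnd hD hm hmk, sub_self]

theorem sub_apply_sub_apply (hk : 2 ≤ k) (hc : ∀ m, f (c m) = c (m + 1))
    (hD : ∀ m < 4 * k, D (c m) = image c k w m) {m : ℕ} (hm : m < 4 * k - 1) :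
    (f - D) ((f - D) (c m)) = 0 := by
  by_cases h : IsEnd m
  · have hNm : (f - D) (c m) = c (m + 1) - c (m - 2) := by
      rw [LinearMap.sub_apply, hc, apply_of_isEnd hD h hm]
    simp only [IsEnd] at h
    rw [hNm, map_sub, sub_apply_eq_zero (m := m + 1) hc hD (by omega) (by omega),
      sub_apply_eq_zero (m := m - 2) hc hD (by omega) (by omega), sub_self]
  · rw [sub_apply_eq_zero hc hD h hm, map_zero]

theorem sub_apply_lift (hc : ∀ m, f (c m) = c (m + 1))
    (hD : ∀ m < 4 * k, D (c m) = image c k w m) {m : ℕ} (hm : m < 4 * k - 1) :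
    (f - D) (lift c m) = (f - D) (c m) := by
  unfold lift
  split_ifs with h
  · rw [map_add, map_add, sub_apply_eq_zero (m := m - 2) hc hD (by omega) (by omega),
      sub_apply_eq_zero (m := m - 1) hc hD (by omega) (by omega), zero_add, zero_add]
  · rw [map_zero, sub_apply_eq_zero hc hD h hm]

end TraceNegOne

open TraceNegOne in
theorem Module.End.exists_sq_eq_zero_add_pow_four_eq_self_of_trace_eq_neg_one
    {R V : Type*} [CommRing R] [AddCommGroup V] [Module R V] {k : ℕ} {f : Module.End R V} {v : V}
    {b : Module.Basis (Fin (4 * k)) R V} (hk : 2 ≤ k) (hb : ∀ i, b i = (f ^ (i : ℕ)) v)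
    (htr : LinearMap.trace R V f = -1) :
    ∃ N D : Module.End R V, f = N + D ∧ N ^ 2 = 0 ∧ D ^ 4 = D := by
  let c : ℕ → V := fun m => (f ^ m) v
  have hc : ∀ m, f (c m) = c (m + 1) := fun m => by simp [c, pow_succ']
  have hb' : ∀ i, b i = c i := hb
  let P := b.constr R fun i => lift c i
  let D := b.constr R fun i => image c k (P (c (4 * k))) i
  have hP : ∀ m < 4 * k, P (c m) = lift c m := fun m => b.constr_apply_pow_apply hb _
  have hD : ∀ m < 4 * k, D (c m) = image c k (P (c (4 * k))) m :=
    fun m => b.constr_apply_pow_apply hb _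
  have hDP : D ∘ₗ P = P := b.ext_pow_apply hb fun m hm => by
    rw [LinearMap.comp_apply, hP m hm]
    by_cases hm' : m < 4 * k - 1
    · exact apply_lift hD hm'
    · rw [lift, if_neg (by omega), map_zero]
  refine ⟨f - D, D, (sub_add_cancel f D).symm, ?_,
    b.ext_pow_apply hb fun m hm => pow_four_apply hk hD (LinearMap.congr_fun hDP _) hm⟩
  obtain ⟨j, hj⟩ : ∃ j : Fin (4 * k), (j : ℕ) = 4 * k - 1 := ⟨⟨4 * k - 1, by omega⟩, rfl⟩
  have hlt : ∀ i ≠ j, (i : ℕ) < 4 * k - 1 := fun i hi => by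
    have := Fin.val_ne_of_ne hi; omega
  refine b.sq_eq_zero_of_apply_ne (P := P) (j := j) (y := c (4 * k))
    (t := -(c (4 * k - 2) + c (4 * k - 1))) (fun i hi => ?_) ?_ (fun i hi => ?_) ?_ ?_
  · rw [hb']
    exact sub_apply_sub_apply hk hc hD (hlt i hi)
  · rw [hb', hj, hP _ (by omega), lift, if_neg (by omega)]
  · rw [hb', hP _ i.isLt]
    exact sub_apply_lift hc hD (hlt i hi)
  · rw [hb', hj, LinearMap.sub_apply, hc, hD _ (by omega), image, if_pos rfl,
      show 4 * k - 1 + 1 = 4 * k by omega]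
    abel
  · rw [← Module.End.trace_eq_repr_pow_apply hb j (by omega), htr, map_neg, map_add,
      sub_apply_eq_zero hc hD (by omega) (by omega), zero_add, neg_one_smul, hb', hj]

theorem stmt6 (k : ℕ) (hk : 2 ≤ k)
    (B : Matrix (Fin (4 * k)) (Fin (4 * k)) (ZMod 2)) (hB : Nonderogative B) :
    ∃ N D : Matrix (Fin (4 * k)) (Fin (4 * k)) (ZMod 2),
      B = N + D ∧ N ^ 2 = 0 ∧ D ^ 4 = D := by
  let e := Matrix.toLinAlgEquiv' (R := ZMod 2) (n := Fin (4 * k))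
  obtain ⟨v, b, hb⟩ := Module.End.exists_basis_pow_apply (e B) (Module.finrank_fin_fun _) <| by
    rw [minpoly.algEquiv_eq, ← hB, Matrix.charpoly_natDegree_eq_dim, Fintype.card_fin]
  obtain ⟨N, D, hBND, hN, hD⟩ : ∃ N D, e B = N + D ∧ N ^ 2 = 0 ∧ D ^ 4 = D := by
    obtain htr | htr := (by decide : ∀ x : ZMod 2, x = 0 ∨ x = -1) (LinearMap.trace _ _ (e B))
    · exact Module.End.exists_sq_eq_zero_add_pow_four_eq_self_of_trace_eq_zero (by omega) hb htr
    · exact Module.End.exists_sq_eq_zero_add_pow_four_eq_self_of_trace_eq_neg_one hk hb htr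
  refine ⟨e.symm N, e.symm D, ?_, by rw [← map_pow, hN, map_zero], by rw [← map_pow, hD]⟩
  rw [← map_add, ← hBND, AlgEquiv.symm_apply_apply]
end

section
/- Let F be a finite field of characteristic 2 with at least 4 elements, and let A be a non-derogative 2×2 matrix over F with trace(A) = 0. Then there exist 2×2 matrices N and D over F such that A = N + D, N² = 0, and D³ = D. -/
/-!
In characteristic 2 a trace-zero matrix has the shape `!![a, b; c, a]`, and if it is not scalar
we may assume `b ≠ 0` after transposing. Choosing `r` with `b * r = a ^ 2 + b * c + 1`, the
unipotent matrix `D = !![1, 0; r, 1]` satisfies `D ^ 2 = 1` (hence `D ^ 3 = D`), and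
`N = A - D = !![a + 1, b; c + r, a + 1]` has `N ^ 2 = ((a + 1) ^ 2 + b * (c + r)) • 1 = 0`.
A scalar matrix of size at least 2 is derogative, its minimal polynomial having degree 1.
-/

open Matrix Polynomial

theorem Nonderogative.ne_scalar {F : Type*} [Field F] {n : ℕ} {A : Matrix (Fin n) (Fin n) F}
    (hA : Nonderogative A) (hn : 2 ≤ n) (a : F) : A ≠ scalar (Fin n) a := by
  rintro rfl
  have hdvd : minpoly F (scalar (Fin n) a) ∣ X - C a :=
    minpoly.dvd _ _ (by simp [algebraMap_eq_diagonal])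
  have hle := natDegree_le_of_dvd hdvd (X_sub_C_ne_zero a)
  rw [← hA, charpoly_natDegree_eq_dim, Fintype.card_fin, natDegree_X_sub_C] at hle
  omega

theorem Matrix.exists_eq_of_trace_eq_zero {R : Type*} [CommRing R] [CharP R 2]
    {A : Matrix (Fin 2) (Fin 2) R} (htr : A.trace = 0) : ∃ a b c, A = !![a, b; c, a] := by
  rw [trace_fin_two, add_comm, ← CharTwo.sub_eq_add, sub_eq_zero] at htr
  exact ⟨A 0 0, A 0 1, A 1 0, htr ▸ eta_fin_two A⟩

theorem Matrix.exists_sq_eq_zero_add_sq_eq_one_of_ne_zero {F : Type*} [Field F]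
    [CharP F 2] {a b : F} (c : F) (hb : b ≠ 0) :
    ∃ N D : Matrix (Fin 2) (Fin 2) F, !![a, b; c, a] = N + D ∧ N ^ 2 = 0 ∧ D ^ 2 = 1 := by
  obtain ⟨r, hr⟩ : ∃ r, b * r = a ^ 2 + b * c + 1 := ⟨_, mul_div_cancel₀ _ hb⟩
  refine ⟨!![a + 1, b; c + r, a + 1], !![1, 0; r, 1], ?_, ?_, ?_⟩
  all_goals
    ext i j
    fin_cases i <;> fin_cases j <;> simp [sq]
  all_goals grind

theorem Matrix.exists_sq_eq_zero_add_sq_eq_one_of_trace_eq_zero {F : Type*} [Field F]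
    [CharP F 2] {A : Matrix (Fin 2) (Fin 2) F} (htr : A.trace = 0)
    (hA : ∀ a, A ≠ scalar (Fin 2) a) :
    ∃ N D : Matrix (Fin 2) (Fin 2) F, A = N + D ∧ N ^ 2 = 0 ∧ D ^ 2 = 1 := by
  obtain ⟨a, b, c, rfl⟩ := exists_eq_of_trace_eq_zero htr
  by_cases hb : b = 0
  · have hc : c ≠ 0 := by
      rintro rfl
      refine hA a ?_
      ext i j; fin_cases i <;> fin_cases j <;> simp [hb]
    obtain ⟨N, D, hND, hN, hD⟩ := exists_sq_eq_zero_add_sq_eq_one_of_ne_zero (a := a) b hc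
    refine ⟨Nᵀ, Dᵀ, ?_, by rw [← transpose_pow, hN, transpose_zero],
      by rw [← transpose_pow, hD, transpose_one]⟩
    rw [← transpose_add, ← hND]
    ext i j; fin_cases i <;> fin_cases j <;> rfl
  · exact exists_sq_eq_zero_add_sq_eq_one_of_ne_zero c hb

theorem stmt16_general (F : Type*) [Field F] [CharP F 2]
    (A : Matrix (Fin 2) (Fin 2) F) (hA : Nonderogative A)
    (htr : Matrix.trace A = 0) :
    ∃ N D : Matrix (Fin 2) (Fin 2) F,
      A = N + D ∧ N ^ 2 = 0 ∧ D ^ 3 = D := by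
  obtain ⟨N, D, hND, hN, hD⟩ :=
    exists_sq_eq_zero_add_sq_eq_one_of_trace_eq_zero htr (hA.ne_scalar le_rfl)
  exact ⟨N, D, hND, hN, by rw [pow_succ', hD, mul_one]⟩

theorem stmt16 (F : Type*) [Field F] [Fintype F] [CharP F 2]
    (hF : 4 ≤ Fintype.card F)
    (A : Matrix (Fin 2) (Fin 2) F) (hA : Nonderogative A)
    (htr : Matrix.trace A = 0) :
    ∃ N D : Matrix (Fin 2) (Fin 2) F,
      A = N + D ∧ N ^ 2 = 0 ∧ D ^ 3 = D :=
  stmt16_general F A hA htr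
end
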